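/- arXiv:2211.06300 — 5 statements merged into one kernel-verified Lean document; each statement's English description precedes it below -/
import Mathlib

section
/- Let A be an invertible n×n complex matrix, R an r×n complex matrix, S := R A⁻¹, β > 0, d ∈ ℂʳ, f ∈ ℂⁿ. Suppose u ∈ ℂⁿ satisfies the WRI normal equation (β AᴴA + RᴴR) u = Rᴴ d + β Aᴴ f, and set q := A u − f and δd := d − R u. Then q = (1/β) Sᴴ δd, and the WRI misfit equals a weighted squared residual: ½‖Ru − d‖² + (β/2)‖q‖² = ½ Re( δdᴴ (I + (1/β) S Sᴴ) δd ). -/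
open Matrix
open scoped ComplexOrder

noncomputable def euclid {m : Type*} [Fintype m] (v : m → ℂ) : EuclideanSpace ℂ m :=
  (WithLp.equiv 2 (m → ℂ)).symm v

lemma euclid_norm_sq {m : Type*} [Fintype m] (v : m → ℂ) :
    ‖euclid v‖ ^ 2 = (star v ⬝ᵥ v).re := by
  rw [EuclideanSpace.norm_eq]
  rw [Real.sq_sqrt (by positivity)]
  simp only [dotProduct, Complex.re_sum, Complex.mul_conj', Complex.ofReal_re]
  refine Finset.sum_congr rfl fun i _ => ?_
  have : euclid v i = v i := rfl
  rw [this, Complex.sq_norm, Complex.normSq_apply]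
  simp [Pi.star_apply, Complex.mul_re]

/-- if `u` solves the WRI normal equation, then the wave-equation
mismatch `q = Au − f` equals `(1/β) Sᴴ δd` with `S = R A⁻¹` and `δd = d − Ru`,
and the WRI misfit is the weighted squared residual
`½ Re(δdᴴ (I + (1/β) S Sᴴ) δd)`. -/
theorem wri_is_weighted_fwi {n r : ℕ}
    (A : Matrix (Fin n) (Fin n) ℂ) (hA : IsUnit A)
    (R : Matrix (Fin r) (Fin n) ℂ) (β : ℝ) (hβ : 0 < β)
    (d : Fin r → ℂ) (f : Fin n → ℂ)
    (S : Matrix (Fin r) (Fin n) ℂ) (hS : S = R * A⁻¹)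
    (u : Fin n → ℂ)
    (hu : ((β : ℂ) • (Aᴴ * A) + Rᴴ * R) *ᵥ u = Rᴴ *ᵥ d + (β : ℂ) • (Aᴴ *ᵥ f))
    (q : Fin n → ℂ) (hq : q = A *ᵥ u - f)
    (δd : Fin r → ℂ) (hδd : δd = d - R *ᵥ u) :
    q = (1 / (β : ℂ)) • (Sᴴ *ᵥ δd) ∧
    (1 / 2 : ℝ) * ‖euclid (R *ᵥ u - d)‖ ^ 2 + (β / 2) * ‖euclid q‖ ^ 2 =
      (1 / 2 : ℝ) * (star δd ⬝ᵥ ((1 + (1 / (β : ℂ)) • (S * Sᴴ)) *ᵥ δd)).re := by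
  have hβ0 : (β : ℂ) ≠ 0 := by exact_mod_cast ne_of_gt hβ
  -- β • Aᴴ q = Rᴴ δd
  have h1 : (β : ℂ) • (Aᴴ *ᵥ q) = Rᴴ *ᵥ δd := by
    subst hq hδd
    have := hu
    simp only [add_mulVec, smul_mulVec, mulVec_mulVec] at this ⊢
    rw [mulVec_sub, mulVec_sub, smul_sub]
    simp only [← mulVec_mulVec] at this
    linear_combination (norm := module) this
  -- Sᴴ δd = β • q
  have hAinv : (A⁻¹)ᴴ * Aᴴ = 1 := by
    rw [← conjTranspose_mul, Matrix.mul_nonsing_inv A ((Matrix.isUnit_iff_isUnit_det A).mp hA),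
      conjTranspose_one]
  have h2 : Sᴴ *ᵥ δd = (β : ℂ) • q := by
    rw [hS, conjTranspose_mul, ← mulVec_mulVec, ← h1, mulVec_smul, mulVec_mulVec,
      hAinv, one_mulVec]
  have hq' : q = (1 / (β : ℂ)) • (Sᴴ *ᵥ δd) := by
    rw [h2, smul_smul, one_div, inv_mul_cancel₀ hβ0, one_smul]
  refine ⟨hq', ?_⟩
  have hres : R *ᵥ u - d = -δd := by rw [hδd]; abel
  -- expand RHS
  have hdot : star δd ⬝ᵥ ((1 + (1 / (β : ℂ)) • (S * Sᴴ)) *ᵥ δd)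
      = star δd ⬝ᵥ δd + (1 / (β : ℂ)) * (star (Sᴴ *ᵥ δd) ⬝ᵥ (Sᴴ *ᵥ δd)) := by
    rw [add_mulVec, one_mulVec, smul_mulVec, dotProduct_add, dotProduct_smul]
    congr 1
    rw [smul_eq_mul]
    congr 1
    rw [star_mulVec, ← mulVec_mulVec, dotProduct_mulVec, conjTranspose_conjTranspose]
  rw [hres, hdot]
  have hnegnorm : ‖euclid (-δd)‖ = ‖euclid δd‖ := by
    have : euclid (-δd) = -(euclid δd) := rfl
    rw [this, norm_neg]
  rw [hnegnorm, euclid_norm_sq, euclid_norm_sq, hq']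
  have hsdot : star ((1 / (β : ℂ)) • (Sᴴ *ᵥ δd)) ⬝ᵥ ((1 / (β : ℂ)) • (Sᴴ *ᵥ δd))
      = (1 / (β : ℂ))^2 * (star (Sᴴ *ᵥ δd) ⬝ᵥ (Sᴴ *ᵥ δd)) := by
    rw [star_smul, smul_dotProduct, dotProduct_smul, smul_eq_mul, smul_eq_mul]
    have : star ((1 : ℂ) / β) = (1 : ℂ) / β := by
      simp [Complex.star_def, Complex.conj_ofReal]
    rw [this]; ring
  rw [hsdot]
  have hb : ((1 / (β : ℂ))^2 * (star (Sᴴ *ᵥ δd) ⬝ᵥ (Sᴴ *ᵥ δd))).re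
      = (1/β)^2 * (star (Sᴴ *ᵥ δd) ⬝ᵥ (Sᴴ *ᵥ δd)).re := by
    have : ((1 / (β : ℂ))^2) = (((1/β)^2 : ℝ) : ℂ) := by push_cast; ring
    rw [this, Complex.re_ofReal_mul]
  have hc : ((1 / (β : ℂ)) * (star (Sᴴ *ᵥ δd) ⬝ᵥ (Sᴴ *ᵥ δd))).re
      = (1/β) * (star (Sᴴ *ᵥ δd) ⬝ᵥ (Sᴴ *ᵥ δd)).re := by
    have : ((1 / (β : ℂ))) = (((1/β) : ℝ) : ℂ) := by push_cast; ring
    rw [this, Complex.re_ofReal_mul]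
  rw [hb, Complex.add_re, hc]
  field_simp
end

section
/- Let S be an r×n complex matrix, B an n×n complex matrix with BᴴB positive definite, β > 0, and d ∈ ℂʳ. Define the synthetic data w := (β I + S (BᴴB)⁻¹ Sᴴ)⁻¹ S (BᴴB)⁻¹ Sᴴ d. Then the solution of the ESI normal equation admits the data-space representation (SᴴS + β BᴴB)⁻¹ Sᴴ d = (β BᴴB)⁻¹ Sᴴ (d − w). -/
open Matrix
open scoped ComplexOrder

lemma smul_posDef {m : ℕ} {M : Matrix (Fin m) (Fin m) ℂ} (hM : M.PosDef)
    {β : ℝ} (hβ : 0 < β) : ((β : ℂ) • M).PosDef := by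
  rw [posDef_iff_dotProduct_mulVec]
  constructor
  · rw [Matrix.IsHermitian, conjTranspose_smul, hM.isHermitian.eq, Complex.star_def,
      Complex.conj_ofReal]
  · intro x hx
    rw [Matrix.smul_mulVec, dotProduct_smul, smul_eq_mul]
    exact mul_pos (by exact_mod_cast hβ) ((posDef_iff_dotProduct_mulVec.mp hM).2 hx)

/-- with `BᴴB` positive definite, `β > 0`, and synthetic data
`w := (β I + S (BᴴB)⁻¹ Sᴴ)⁻¹ S (BᴴB)⁻¹ Sᴴ d`, the solution of the ESI normal
equation admits the data-space representation
`(SᴴS + β BᴴB)⁻¹ Sᴴ d = (β BᴴB)⁻¹ Sᴴ (d − w)`. -/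
theorem esi_data_space_representation {n r : ℕ}
    (S : Matrix (Fin r) (Fin n) ℂ) (B : Matrix (Fin n) (Fin n) ℂ)
    (hB : (Bᴴ * B).PosDef) (β : ℝ) (hβ : 0 < β) (d : Fin r → ℂ)
    (w : Fin r → ℂ)
    (hw : w = ((β : ℂ) • (1 : Matrix (Fin r) (Fin r) ℂ) + S * (Bᴴ * B)⁻¹ * Sᴴ)⁻¹ *ᵥ
      ((S * (Bᴴ * B)⁻¹ * Sᴴ) *ᵥ d)) :
    (Sᴴ * S + (β : ℂ) • (Bᴴ * B))⁻¹ *ᵥ (Sᴴ *ᵥ d) =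
      ((β : ℂ) • (Bᴴ * B))⁻¹ *ᵥ (Sᴴ *ᵥ (d - w)) := by
  set M := Bᴴ * B with hMdef
  set A := Sᴴ * S + (β : ℂ) • M with hA
  set K := (β : ℂ) • (1 : Matrix (Fin r) (Fin r) ℂ) + S * M⁻¹ * Sᴴ with hK
  have hβ0 : (β : ℂ) ≠ 0 := by exact_mod_cast hβ.ne'
  have hMinv : M⁻¹.PosDef := hB.inv
  have hSMS : (S * M⁻¹ * Sᴴ).PosSemidef := hMinv.posSemidef.mul_mul_conjTranspose_same S
  have hKpd : K.PosDef := (smul_posDef Matrix.PosDef.one hβ).add_posSemidef hSMS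
  have hApd : A.PosDef :=
    Matrix.PosDef.posSemidef_add (Matrix.posSemidef_conjTranspose_mul_self S) (smul_posDef hB hβ)
  have hKw : K *ᵥ w = (S * M⁻¹ * Sᴴ) *ᵥ d := by
    rw [hw, mulVec_mulVec, Matrix.mul_nonsing_inv _ hKpd.det_pos.ne'.isUnit, one_mulVec]
  have hSMSdw : (S * M⁻¹ * Sᴴ) *ᵥ (d - w) = (β : ℂ) • w := by
    rw [mulVec_sub, ← hKw, hK, add_mulVec, smul_mulVec, one_mulVec, add_sub_cancel_right]
  have hMi : ((β : ℂ) • M)⁻¹ = (β : ℂ)⁻¹ • M⁻¹ :=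
    Matrix.inv_eq_left_inv (by
      rw [Matrix.smul_mul, Matrix.mul_smul, smul_smul, inv_mul_cancel₀ hβ0, one_smul,
        Matrix.nonsing_inv_mul _ hB.det_pos.ne'.isUnit])
  have key : A *ᵥ (((β : ℂ) • M)⁻¹ *ᵥ (Sᴴ *ᵥ (d - w))) = Sᴴ *ᵥ d := by
    rw [hMi, mulVec_mulVec, hA]
    rw [Matrix.add_mul, Matrix.mul_smul, Matrix.smul_mul, mul_smul_comm, smul_smul,
      mul_inv_cancel₀ hβ0, one_smul, Matrix.mul_nonsing_inv _ hB.det_pos.ne'.isUnit]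
    rw [add_mulVec, one_mulVec, smul_mulVec]
    have h2 : (Sᴴ * S * M⁻¹) *ᵥ (Sᴴ *ᵥ (d - w)) = Sᴴ *ᵥ ((S * M⁻¹ * Sᴴ) *ᵥ (d - w)) := by
      rw [mulVec_mulVec, mulVec_mulVec, Matrix.mul_assoc, Matrix.mul_assoc, Matrix.mul_assoc]
    rw [h2, hSMSdw, mulVec_smul, smul_smul, inv_mul_cancel₀ hβ0, one_smul, mulVec_sub]
    abel
  rw [← key, mulVec_mulVec, Matrix.nonsing_inv_mul _ hApd.det_pos.ne'.isUnit, one_mulVec]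
end

section
/- Let S be an r×n complex matrix such that P := S (BᴴB)⁻¹ Sᴴ is positive definite, where B is an n×n complex matrix with BᴴB positive definite, and let d ∈ ℂʳ. For β > 0 define w(β) := (β I + P)⁻¹ P d. Then w(β) converges to d as β tends to 0 from the right. -/
open Matrix Filter
open scoped ComplexOrder Topology

/-- if `P := S (BᴴB)⁻¹ Sᴴ` is positive definite (with `BᴴB`
positive definite), then the synthetic data `w(β) := (β I + P)⁻¹ P d`
converges to `d` as the penalty `β` tends to `0` from the right. -/
theorem esi_synthetic_data_tendsto {n r : ℕ}
    (S : Matrix (Fin r) (Fin n) ℂ) (B : Matrix (Fin n) (Fin n) ℂ)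
    (hB : (Bᴴ * B).PosDef)
    (P : Matrix (Fin r) (Fin r) ℂ) (hP : P = S * (Bᴴ * B)⁻¹ * Sᴴ)
    (hPpd : P.PosDef) (d : Fin r → ℂ) :
    Tendsto
      (fun β : ℝ =>
        euclid ((((β : ℂ) • (1 : Matrix (Fin r) (Fin r) ℂ) + P)⁻¹) *ᵥ (P *ᵥ d)))
      (𝓝[>] (0 : ℝ)) (𝓝 (euclid d)) := by
  have hPu : IsUnit P.det := hPpd.det_pos.ne'.isUnit
  have hlim0 : Tendsto (fun β : ℝ => ((β : ℂ) • (1 : Matrix (Fin r) (Fin r) ℂ) + P))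
      (𝓝 (0 : ℝ)) (𝓝 P) := by
    have : Continuous (fun β : ℝ => ((β : ℂ) • (1 : Matrix (Fin r) (Fin r) ℂ) + P)) := by
      continuity
    have h := this.tendsto 0
    simpa using h
  have hinv : ContinuousAt Inv.inv P :=
    continuousAt_matrix_inv P (NormedRing.inverse_continuousAt hPu.unit)
  have hlim1 : Tendsto (fun β : ℝ => (((β : ℂ) • (1 : Matrix (Fin r) (Fin r) ℂ) + P)⁻¹))
      (𝓝 (0 : ℝ)) (𝓝 P⁻¹) := hinv.tendsto.comp hlim0
  have hlim2 : Tendsto (fun β : ℝ =>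
      euclid ((((β : ℂ) • (1 : Matrix (Fin r) (Fin r) ℂ) + P)⁻¹) *ᵥ (P *ᵥ d)))
      (𝓝 (0 : ℝ)) (𝓝 (euclid (P⁻¹ *ᵥ (P *ᵥ d)))) := by
    have hmv : Continuous (fun M : Matrix (Fin r) (Fin r) ℂ => euclid (M *ᵥ (P *ᵥ d))) := by
      apply Continuous.comp
      · exact (PiLp.continuous_toLp 2 (fun _ : Fin r => ℂ))
      · exact Continuous.matrix_mulVec continuous_id continuous_const
    exact hmv.continuousAt.tendsto.comp hlim1
  have key : P⁻¹ *ᵥ (P *ᵥ d) = d := by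
    rw [Matrix.mulVec_mulVec, Matrix.nonsing_inv_mul _ hPu, Matrix.one_mulVec]
  rw [key] at hlim2
  exact hlim2.mono_left nhdsWithin_le_nhds
end

section
/- Let A be an invertible n×n complex matrix, R an r×n complex matrix, S := R A⁻¹, β > 0, d ∈ ℂʳ, f ∈ ℂⁿ. Define q := (SᴴS + β I)⁻¹ Sᴴ (d − S f), w := (β I + S Sᴴ)⁻¹ S Sᴴ (d − S f), and u := A⁻¹ (f + q). Then q = (1/β) Sᴴ (d − S f − w), the synthetic data satisfy R u = S f + w, and consequently the WRI data residual equals d − R u = d − S f − w. -/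
open Matrix
open scoped ComplexOrder

private lemma smul_one_posDef {m : ℕ} {β : ℝ} (hβ : 0 < β) :
    ((β:ℂ) • (1 : Matrix (Fin m) (Fin m) ℂ)).PosDef := by
  rw [smul_one_eq_diagonal]
  exact posDef_diagonal_iff.2 (fun _ => by exact_mod_cast hβ)

/-- data-space reformulation of WRI. With `S = R A⁻¹`, `β > 0`,
`q := (SᴴS + β I)⁻¹ Sᴴ (d − S f)`, `w := (β I + S Sᴴ)⁻¹ S Sᴴ (d − S f)` and
`u := A⁻¹ (f + q)`, one has `q = (1/β) Sᴴ (d − S f − w)`, the synthetic data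
satisfy `R u = S f + w`, and the WRI data residual is `d − R u = d − S f − w`. -/
theorem wri_data_space_representation {n r : ℕ}
    (A : Matrix (Fin n) (Fin n) ℂ) (hA : IsUnit A)
    (R : Matrix (Fin r) (Fin n) ℂ)
    (S : Matrix (Fin r) (Fin n) ℂ) (hS : S = R * A⁻¹)
    (β : ℝ) (hβ : 0 < β) (d : Fin r → ℂ) (f : Fin n → ℂ)
    (q : Fin n → ℂ)
    (hq : q = (Sᴴ * S + (β : ℂ) • (1 : Matrix (Fin n) (Fin n) ℂ))⁻¹ *ᵥ
      (Sᴴ *ᵥ (d - S *ᵥ f)))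
    (w : Fin r → ℂ)
    (hw : w = ((β : ℂ) • (1 : Matrix (Fin r) (Fin r) ℂ) + S * Sᴴ)⁻¹ *ᵥ
      ((S * Sᴴ) *ᵥ (d - S *ᵥ f)))
    (u : Fin n → ℂ) (hu : u = A⁻¹ *ᵥ (f + q)) :
    q = (1 / (β : ℂ)) • (Sᴴ *ᵥ (d - S *ᵥ f - w)) ∧
    R *ᵥ u = S *ᵥ f + w ∧
    d - R *ᵥ u = d - S *ᵥ f - w := by
  set b : Fin r → ℂ := d - S *ᵥ f with hb
  set M : Matrix (Fin n) (Fin n) ℂ := Sᴴ * S + (β : ℂ) • 1 with hM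
  set N : Matrix (Fin r) (Fin r) ℂ := (β : ℂ) • 1 + S * Sᴴ with hN
  clear_value b M N
  have hβ0 : (β : ℂ) ≠ 0 := by exact_mod_cast hβ.ne'
  have hMu : IsUnit M.det := by
    rw [hM]
    exact (Matrix.isUnit_iff_isUnit_det _).1
      ((Matrix.PosDef.posSemidef_add (posSemidef_conjTranspose_mul_self S)
        (smul_one_posDef hβ)).isUnit)
  have hNu : IsUnit N.det := by
    rw [hN]
    exact (Matrix.isUnit_iff_isUnit_det _).1
      ((Matrix.PosDef.add_posSemidef (smul_one_posDef hβ)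
        (posSemidef_self_mul_conjTranspose S)).isUnit)
  -- key commutation identities
  have hcomm : M * Sᴴ = Sᴴ * N := by
    rw [hM, hN, Matrix.add_mul, Matrix.mul_add, Matrix.smul_mul, Matrix.one_mul,
      Matrix.mul_smul, Matrix.mul_one, Matrix.mul_assoc, add_comm]
  have key1 : M⁻¹ * Sᴴ = Sᴴ * N⁻¹ := by
    calc M⁻¹ * Sᴴ = M⁻¹ * (Sᴴ * N) * N⁻¹ := by
            rw [Matrix.mul_assoc M⁻¹ (Sᴴ * N) N⁻¹, Matrix.mul_assoc Sᴴ N N⁻¹,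
              Matrix.mul_nonsing_inv _ hNu, Matrix.mul_one]
      _ = M⁻¹ * (M * Sᴴ) * N⁻¹ := by rw [hcomm]
      _ = Sᴴ * N⁻¹ := by
            rw [← Matrix.mul_assoc M⁻¹ M Sᴴ, Matrix.nonsing_inv_mul _ hMu, Matrix.one_mul]
  have hcomm2 : N * (S * Sᴴ) = (S * Sᴴ) * N := by
    rw [hN, Matrix.add_mul, Matrix.mul_add, Matrix.smul_mul, Matrix.one_mul,
      Matrix.mul_smul, Matrix.mul_one]
  have key2 : N⁻¹ * (S * Sᴴ) = (S * Sᴴ) * N⁻¹ := by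
    calc N⁻¹ * (S * Sᴴ) = N⁻¹ * ((S * Sᴴ) * N) * N⁻¹ := by
            rw [Matrix.mul_assoc N⁻¹ ((S * Sᴴ) * N) N⁻¹, Matrix.mul_assoc (S * Sᴴ) N N⁻¹,
              Matrix.mul_nonsing_inv _ hNu, Matrix.mul_one]
      _ = N⁻¹ * (N * (S * Sᴴ)) * N⁻¹ := by rw [hcomm2]
      _ = (S * Sᴴ) * N⁻¹ := by
            rw [← Matrix.mul_assoc N⁻¹ N (S * Sᴴ), Matrix.nonsing_inv_mul _ hNu,
              Matrix.one_mul]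
  -- q in terms of N⁻¹
  have hq' : q = (Sᴴ * N⁻¹) *ᵥ b := by
    rw [hq, mulVec_mulVec, key1]
  -- b - w = β • (N⁻¹ *ᵥ b)
  have hbw : b - w = (β : ℂ) • (N⁻¹ *ᵥ b) := by
    have hNb : N *ᵥ b = (β : ℂ) • b + (S * Sᴴ) *ᵥ b := by
      rw [hN, add_mulVec, smul_mulVec, one_mulVec]
    have hcancel : N⁻¹ *ᵥ (N *ᵥ b) = b := by
      rw [mulVec_mulVec, Matrix.nonsing_inv_mul _ hNu, one_mulVec]
    rw [hw]
    calc b - N⁻¹ *ᵥ ((S * Sᴴ) *ᵥ b)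
        = N⁻¹ *ᵥ (N *ᵥ b) - N⁻¹ *ᵥ ((S * Sᴴ) *ᵥ b) := by rw [hcancel]
      _ = N⁻¹ *ᵥ (N *ᵥ b - (S * Sᴴ) *ᵥ b) := by rw [mulVec_sub]
      _ = N⁻¹ *ᵥ ((β : ℂ) • b) := by rw [hNb, add_sub_cancel_right]
      _ = (β : ℂ) • (N⁻¹ *ᵥ b) := by rw [mulVec_smul]
  have goal1 : q = (1 / (β : ℂ)) • (Sᴴ *ᵥ (b - w)) := by
    rw [hbw, mulVec_smul, smul_smul, one_div, inv_mul_cancel₀ hβ0, one_smul, hq',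
      ← mulVec_mulVec]
  have goal2 : R *ᵥ u = S *ᵥ f + w := by
    have hSq : S *ᵥ q = w := by
      rw [hq', mulVec_mulVec, ← Matrix.mul_assoc, ← key2, hw, ← mulVec_mulVec]
    rw [hu, mulVec_mulVec, ← hS, mulVec_add, hSq]
  exact ⟨goal1, goal2, by rw [goal2, sub_add_eq_sub_sub, hb]⟩
end

section
/- Let A be an invertible n×n complex matrix, B an n×n complex matrix with BᴴB positive definite, R an r×n complex matrix, β > 0, γ > 0, d ∈ ℂʳ, and suppose γ (BA)ᴴ(BA) − RᴴR is positive semidefinite. Define J(u) = ½‖d − Ru‖² + (β/2)‖BAu‖² and J'(u; v) = J(u) + ½ Re( (u − v)ᴴ (γ (BA)ᴴ(BA) − RᴴR) (u − v) ). Then for every v ∈ ℂⁿ the surrogate J'(·; v) has the unique minimizer u = (1/(β+γ)) ( γ v + A⁻¹ (BᴴB)⁻¹ A⁻ᴴ Rᴴ (d − R v) ), equivalently u solves (β+γ)(BA)ᴴ(BA) u = γ (BA)ᴴ(BA) v + Rᴴ (d − R v). -/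
open Matrix
open scoped ComplexOrder

/-- The ESI misfit viewed as a function of the wavefield:
`J(u) = ½‖d − Ru‖² + (β/2)‖BAu‖²`. -/
noncomputable def esiFieldMisfit {n r : ℕ} (R : Matrix (Fin r) (Fin n) ℂ)
    (B A : Matrix (Fin n) (Fin n) ℂ) (β : ℝ) (d : Fin r → ℂ) (u : Fin n → ℂ) : ℝ :=
  (1 / 2 : ℝ) * ‖euclid (d - R *ᵥ u)‖ ^ 2 + (β / 2) * ‖euclid ((B * A) *ᵥ u)‖ ^ 2

/-- The majorizing surrogate
`J'(u; v) = J(u) + ½ Re((u − v)ᴴ (γ (BA)ᴴ(BA) − RᴴR) (u − v))`. -/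
noncomputable def esiSurrogate {n r : ℕ} (R : Matrix (Fin r) (Fin n) ℂ)
    (B A : Matrix (Fin n) (Fin n) ℂ) (β γ : ℝ) (d : Fin r → ℂ)
    (u v : Fin n → ℂ) : ℝ :=
  esiFieldMisfit R B A β d u +
    (1 / 2 : ℝ) *
      (star (u - v) ⬝ᵥ
        (((γ : ℂ) • ((B * A)ᴴ * (B * A)) - Rᴴ * R) *ᵥ (u - v))).re

lemma norm_euclid_sq {m : Type*} [Fintype m] (x : m → ℂ) :
    ‖euclid x‖ ^ 2 = (star x ⬝ᵥ x).re := by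
  have h : ‖euclid x‖ = Real.sqrt (∑ i, ‖x i‖ ^ 2) := by
    simpa [euclid] using EuclideanSpace.norm_eq (euclid x)
  rw [h, Real.sq_sqrt (by positivity)]
  simp [dotProduct, Complex.re_sum, Pi.star_apply, Complex.mul_re, Complex.star_def,
    Complex.sq_norm, Complex.normSq_apply]

lemma gram {m k : Type*} [Fintype m] [Fintype k] (N : Matrix m k ℂ) (x y : k → ℂ) :
    star (N *ᵥ x) ⬝ᵥ (N *ᵥ y) = star x ⬝ᵥ ((Nᴴ * N) *ᵥ y) := by
  rw [star_mulVec, dotProduct_mulVec, dotProduct_mulVec, vecMul_vecMul]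

lemma cross_re {n : ℕ} (S : Matrix (Fin n) (Fin n) ℂ) (hS : Sᴴ = S) (u w : Fin n → ℂ) :
    (star u ⬝ᵥ S *ᵥ w).re = (star w ⬝ᵥ S *ᵥ u).re := by
  have h : star u ⬝ᵥ S *ᵥ w = star (star w ⬝ᵥ S *ᵥ u) := by
    rw [star_dotProduct]
    congr 1
    rw [star_mulVec, hS, ← dotProduct_mulVec]
  rw [h, Complex.star_def, Complex.conj_re]

lemma herm_expand {n : ℕ} (S : Matrix (Fin n) (Fin n) ℂ) (hS : Sᴴ = S) (x w : Fin n → ℂ) :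
    (star (x + w) ⬝ᵥ S *ᵥ (x + w)).re =
      (star x ⬝ᵥ S *ᵥ x).re + 2 * (star w ⬝ᵥ S *ᵥ x).re + (star w ⬝ᵥ S *ᵥ w).re := by
  simp only [star_add, add_dotProduct, Matrix.mulVec_add, dotProduct_add, Complex.add_re]
  rw [cross_re S hS x w]
  ring

lemma quad_min_iff {n : ℕ} (Q : Matrix (Fin n) (Fin n) ℂ) (hQ : Q.PosDef) (b : Fin n → ℂ)
    (f : (Fin n → ℂ) → ℝ)
    (hf : ∀ u w, f (u + w) = f u + (star w ⬝ᵥ (Q *ᵥ u - b)).re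
      + (1 / 2 : ℝ) * (star w ⬝ᵥ Q *ᵥ w).re) :
    ∀ u, (∀ u', f u ≤ f u') ↔ Q *ᵥ u = b := by
  have hQre : ∀ w, 0 ≤ (star w ⬝ᵥ Q *ᵥ w).re := fun w => by
    have := hQ.posSemidef.dotProduct_mulVec_nonneg w
    rw [Complex.le_def] at this
    simpa using this.1
  have hQpos : ∀ w, w ≠ 0 → 0 < (star w ⬝ᵥ Q *ᵥ w).re := fun w hw => by
    have := hQ.dotProduct_mulVec_pos hw
    rw [Complex.lt_def] at this
    simpa using this.1
  have hmin : ∀ u, Q *ᵥ u = b → ∀ u', f u ≤ f u' := by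
    intro u hu u'
    have h := hf u (u' - u)
    rw [add_sub_cancel] at h
    rw [h, hu, sub_self]
    simp only [dotProduct_zero, Complex.zero_re, add_zero]
    nlinarith [hQre (u' - u)]
  intro u
  constructor
  · intro hmin'
    -- compare with u₀ := Q⁻¹ *ᵥ b
    have hQu : IsUnit Q := hQ.isUnit
    have hQdet : IsUnit Q.det := (Matrix.isUnit_iff_isUnit_det Q).mp hQu
    set u₀ := Q⁻¹ *ᵥ b with hu₀
    have hQu₀ : Q *ᵥ u₀ = b := by
      rw [hu₀, Matrix.mulVec_mulVec, Matrix.mul_nonsing_inv Q hQdet, Matrix.one_mulVec]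
    have h := hf u₀ (u - u₀)
    rw [add_sub_cancel] at h
    rw [hQu₀, sub_self] at h
    simp only [dotProduct_zero, Complex.zero_re, add_zero] at h
    have h1 : f u ≤ f u₀ := hmin' u₀
    have h2 : f u₀ ≤ f u := hmin u₀ hQu₀ u
    by_cases hw : u - u₀ = 0
    · rw [sub_eq_zero] at hw
      rw [hw, hQu₀]
    · exfalso
      have := hQpos _ hw
      nlinarith
  · exact hmin u

lemma re_symm {m : Type*} [Fintype m] (x y : m → ℂ) :
    (star x ⬝ᵥ y).re = (star y ⬝ᵥ x).re := by
  rw [star_dotProduct, Complex.star_def, Complex.conj_re]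

lemma gram' {m k : Type*} [Fintype m] [Fintype k] (N : Matrix m k ℂ) (x : k → ℂ) (z : m → ℂ) :
    star (N *ᵥ x) ⬝ᵥ z = star x ⬝ᵥ (Nᴴ *ᵥ z) := by
  rw [star_mulVec, ← dotProduct_mulVec]

lemma euclid_expand {m : Type*} [Fintype m] (x y : m → ℂ) :
    (star (x + y) ⬝ᵥ (x + y)).re =
      (star x ⬝ᵥ x).re + 2 * (star y ⬝ᵥ x).re + (star y ⬝ᵥ y).re := by
  simp only [star_add, add_dotProduct, dotProduct_add, Complex.add_re]
  rw [re_symm x y]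
  ring

lemma esi_expand {n r : ℕ} (R : Matrix (Fin r) (Fin n) ℂ) (B A : Matrix (Fin n) (Fin n) ℂ)
    (β γ : ℝ) (d : Fin r → ℂ)
    (hS : ((γ : ℂ) • ((B * A)ᴴ * (B * A)) - Rᴴ * R).IsHermitian)
    (v u w : Fin n → ℂ) :
    esiSurrogate R B A β γ d (u + w) v =
      esiSurrogate R B A β γ d u v
      + (star w ⬝ᵥ ((((β + γ : ℝ) : ℂ) • ((B * A)ᴴ * (B * A))) *ᵥ u
          - ((γ : ℂ) • (((B * A)ᴴ * (B * A)) *ᵥ v) + Rᴴ *ᵥ (d - R *ᵥ v)))).re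
      + (1 / 2 : ℝ) * (star w ⬝ᵥ (((β + γ : ℝ) : ℂ) • ((B * A)ᴴ * (B * A))) *ᵥ w).re := by
  set M := (B * A)ᴴ * (B * A) with hMdef
  have hM : M.IsHermitian := by
    show Mᴴ = M
    rw [hMdef, conjTranspose_mul, conjTranspose_conjTranspose]
  set S := (γ : ℂ) • M - Rᴴ * R with hSdef
  have h1 : d - R *ᵥ (u + w) = (d - R *ᵥ u) + (-(R *ᵥ w)) := by
    rw [Matrix.mulVec_add]; abel
  have h2 : u + w - v = (u - v) + w := by abel
  simp only [esiSurrogate, esiFieldMisfit, norm_euclid_sq, h1, h2]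
  rw [euclid_expand, herm_expand S hS (u - v) w]
  have h3 : (star ((B * A) *ᵥ (u + w)) ⬝ᵥ ((B * A) *ᵥ (u + w))).re
      = (star (u + w) ⬝ᵥ M *ᵥ (u + w)).re := by rw [_root_.gram]
  have h4 : (star ((B * A) *ᵥ u) ⬝ᵥ ((B * A) *ᵥ u)).re
      = (star u ⬝ᵥ M *ᵥ u).re := by rw [_root_.gram]
  rw [h3, h4, herm_expand M hM u w]
  have h5 : (star (-(R *ᵥ w)) ⬝ᵥ (d - R *ᵥ u)).re
      = -(star w ⬝ᵥ (Rᴴ *ᵥ (d - R *ᵥ u))).re := by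
    rw [star_neg, neg_dotProduct, gram', Complex.neg_re]
  have h6 : (star (-(R *ᵥ w)) ⬝ᵥ -(R *ᵥ w)).re = (star w ⬝ᵥ ((Rᴴ * R) *ᵥ w)).re := by
    rw [star_neg, neg_dotProduct, dotProduct_neg, neg_neg, _root_.gram]
  rw [h5, h6]
  -- now pure linear algebra in re-atoms
  simp only [hSdef, Matrix.sub_mulVec, Matrix.smul_mulVec, Matrix.mulVec_sub,
    Matrix.mulVec_add, dotProduct_sub, dotProduct_add, dotProduct_smul, smul_eq_mul,
    Complex.sub_re, Complex.add_re, Complex.re_ofReal_mul, Complex.ofReal_add, add_mul]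
  simp only [Matrix.mulVec_mulVec, ← hMdef]
  ring

/-- with `A` invertible, `BᴴB` positive definite, `β, γ > 0` and
`γ (BA)ᴴ(BA) − RᴴR` positive semidefinite, for every `v` the surrogate
`J'(·; v)` has the unique minimizer
`u = (1/(β+γ)) (γ v + A⁻¹ (BᴴB)⁻¹ A⁻ᴴ Rᴴ (d − R v))`; equivalently, `u`
minimizes `J'(·; v)` iff `(β+γ)(BA)ᴴ(BA) u = γ (BA)ᴴ(BA) v + Rᴴ (d − R v)`. -/
theorem esi_surrogate_unique_minimizer {n r : ℕ}
    (R : Matrix (Fin r) (Fin n) ℂ) (B A : Matrix (Fin n) (Fin n) ℂ)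
    (hA : IsUnit A) (hB : (Bᴴ * B).PosDef)
    (β γ : ℝ) (hβ : 0 < β) (hγ : 0 < γ) (d : Fin r → ℂ)
    (hpsd : ((γ : ℂ) • ((B * A)ᴴ * (B * A)) - Rᴴ * R).PosSemidef) :
    ∀ v : Fin n → ℂ,
      (∀ u' : Fin n → ℂ,
        esiSurrogate R B A β γ d
            ((1 / (((β + γ : ℝ)) : ℂ)) •
              ((γ : ℂ) • v + (A⁻¹ * (Bᴴ * B)⁻¹ * (Aᴴ)⁻¹ * Rᴴ) *ᵥ (d - R *ᵥ v))) v ≤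
          esiSurrogate R B A β γ d u' v) ∧
      (∀ u : Fin n → ℂ,
        (∀ u' : Fin n → ℂ, esiSurrogate R B A β γ d u v ≤ esiSurrogate R B A β γ d u' v) →
          u = (1 / (((β + γ : ℝ)) : ℂ)) •
            ((γ : ℂ) • v + (A⁻¹ * (Bᴴ * B)⁻¹ * (Aᴴ)⁻¹ * Rᴴ) *ᵥ (d - R *ᵥ v))) ∧
      (∀ u : Fin n → ℂ,
        (∀ u' : Fin n → ℂ, esiSurrogate R B A β γ d u v ≤ esiSurrogate R B A β γ d u' v) ↔
          (((β + γ : ℝ)) : ℂ) • (((B * A)ᴴ * (B * A)) *ᵥ u) =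
            (γ : ℂ) • (((B * A)ᴴ * (B * A)) *ᵥ v) + Rᴴ *ᵥ (d - R *ᵥ v)) := by
  intro v
  have hβγ : (0 : ℝ) < β + γ := by linarith
  have hne : ((β + γ : ℝ) : ℂ) ≠ 0 := Complex.ofReal_ne_zero.mpr (ne_of_gt hβγ)
  set M := (B * A)ᴴ * (B * A) with hMdef
  set Q := ((β + γ : ℝ) : ℂ) • M with hQdef
  set b := (γ : ℂ) • (M *ᵥ v) + Rᴴ *ᵥ (d - R *ᵥ v) with hbdef
  have hMherm : M.IsHermitian := by
    show Mᴴ = M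
    rw [hMdef, conjTranspose_mul, conjTranspose_conjTranspose]
  have hAinj : Function.Injective A.mulVec := mulVec_injective_iff_isUnit.mpr hA
  have hMpd : M.PosDef := by
    refine Matrix.PosDef.of_dotProduct_mulVec_pos hMherm (fun x hx => ?_)
    have hx' : A *ᵥ x ≠ 0 := by
      intro h
      exact hx (hAinj (by rw [h, Matrix.mulVec_zero]))
    have hpos := hB.dotProduct_mulVec_pos hx'
    have heq : star x ⬝ᵥ M *ᵥ x = star (A *ᵥ x) ⬝ᵥ (Bᴴ * B) *ᵥ (A *ᵥ x) := by
      rw [← _root_.gram, ← _root_.gram, Matrix.mulVec_mulVec]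
    rw [heq]
    exact hpos
  have hQpd : Q.PosDef := by
    refine Matrix.PosDef.of_dotProduct_mulVec_pos ?_ ?_
    · show Qᴴ = Q
      rw [hQdef, conjTranspose_smul, hMherm]
      congr 1
      simp [Complex.star_def, Complex.conj_ofReal]
    · intro x hx
      have hpos := hMpd.dotProduct_mulVec_pos hx
      rw [hQdef, Matrix.smul_mulVec, dotProduct_smul, smul_eq_mul]
      exact mul_pos (Complex.zero_lt_real.mpr hβγ) hpos
  have hf : ∀ u wq, esiSurrogate R B A β γ d (u + wq) v =
      esiSurrogate R B A β γ d u v + (star wq ⬝ᵥ (Q *ᵥ u - b)).re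
        + (1 / 2 : ℝ) * (star wq ⬝ᵥ Q *ᵥ wq).re := by
    intro u wq
    simpa [hQdef, hMdef, hbdef] using esi_expand R B A β γ d hpsd.1 v u wq
  have key := quad_min_iff Q hQpd b (fun u => esiSurrogate R B A β γ d u v) hf
  -- the closed-form solution
  have hAdet : IsUnit A.det := (Matrix.isUnit_iff_isUnit_det A).mp hA
  have hCdet : IsUnit (Bᴴ * B).det := (Matrix.isUnit_iff_isUnit_det _).mp hB.isUnit
  have hAHdet : IsUnit (Aᴴ).det := by rw [Matrix.det_conjTranspose]; exact hAdet.star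
  have hMN : M * (A⁻¹ * (Bᴴ * B)⁻¹ * (Aᴴ)⁻¹ * Rᴴ) = Rᴴ := by
    have hM2 : M = Aᴴ * ((Bᴴ * B) * A) := by
      rw [hMdef, conjTranspose_mul]
      simp [Matrix.mul_assoc]
    rw [hM2]
    simp only [Matrix.mul_assoc]
    rw [Matrix.mul_nonsing_inv_cancel_left _ _ hAdet, ← Matrix.mul_assoc Bᴴ B,
      Matrix.mul_nonsing_inv_cancel_left _ _ hCdet,
      Matrix.mul_nonsing_inv_cancel_left _ _ hAHdet]
  set ustar := (1 / ((β + γ : ℝ) : ℂ)) •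
      ((γ : ℂ) • v + (A⁻¹ * (Bᴴ * B)⁻¹ * (Aᴴ)⁻¹ * Rᴴ) *ᵥ (d - R *ᵥ v)) with hustar
  have hstar : Q *ᵥ ustar = b := by
    rw [hustar, hQdef, hbdef, Matrix.smul_mulVec, Matrix.mulVec_smul, smul_smul,
      mul_one_div, div_self hne, one_smul, Matrix.mulVec_add, Matrix.mulVec_smul,
      Matrix.mulVec_mulVec, hMN]
  refine ⟨fun u' => (key ustar).mpr hstar u', fun u hu => ?_, fun u => ?_⟩
  · have h1 := (key u).mp hu
    exact (mulVec_injective_iff_isUnit.mpr hQpd.isUnit) (h1.trans hstar.symm)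
  · rw [key u, hQdef, hbdef, Matrix.smul_mulVec]
end
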